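/- arXiv:2511.07614 — 3 statements merged into one kernel-verified Lean document; each statement's English description precedes it below -/
import Mathlib

section
/- Let R be a principal ideal domain and let f : ℕ → (R-Mod) with structure maps be a persistence module indexed by a totally ordered set such that each f_i is a finitely generated free R-module. Fix an index a. Then the family of submodules {ker(f(a ≤ y)) : y ≥ a} of f_a, ordered by inclusion, is a finite chain. Equivalently, there is no strictly increasing infinite chain ker(f(a ≤ y₁)) ⊊ ker(f(a ≤ y₂)) ⊊ ⋯ of kernels out of f_a. -/
/-!
The kernels `ker f(a ≤ y)` increase with `y`, so they form a chain of submodules of `f_a`.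
If `ker f(a ≤ y₁) < ker f(a ≤ y₂)`, then `f(a ≤ y₁)` embeds the quotient of these kernels into
the torsion-free module `f_{y₁}`, so the quotient has positive rank and, by rank-nullity over a
domain, the rank of the kernels strictly increases. The ranks are bounded by `rank f_a`, so a
chain of kernels has at most `rank f_a + 1` members.
-/

open Module

theorem LinearMap.finrank_ker_lt_finrank_of_ker_lt {R M N : Type*} [CommRing R] [IsDomain R]
    [AddCommGroup M] [Module R M] [Module.Finite R M]
    [AddCommGroup N] [Module R N] [IsTorsionFree R N]
    (φ : M →ₗ[R] N) {K : Submodule R M} (hK : ker φ < K) :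
    finrank R (ker φ) < finrank R K := by
  set ψ := φ.domRestrict K
  have : Nontrivial (range ψ) := by
    obtain ⟨x, hxK, hxφ⟩ := SetLike.exists_of_lt hK
    refine nontrivial_of_ne ⟨ψ ⟨x, hxK⟩, mem_range_self ψ _⟩ 0 fun h ↦ hxφ ?_
    simpa [ψ] using congrArg Subtype.val h
  have hker : Module.rank R (ker ψ) = finrank R (ker φ) := by
    rw [ker_domRestrict, Submodule.finrank_eq_rank]
    exact (Submodule.comapSubtypeEquivOfLe hK.le).rank_eq
  have hrn := ψ.lift_rank_range_add_rank_ker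
  rw [hker, ← Submodule.finrank_eq_rank R M K, Cardinal.lift_natCast,
    Cardinal.lift_natCast] at hrn
  have hpos : 0 < Cardinal.lift (Module.rank R (range ψ)) :=
    Cardinal.zero_lt_lift_iff.mpr rank_pos
  obtain ⟨n, hn⟩ := Cardinal.lt_aleph0.mp <|
    le_self_add.trans_lt (hrn ▸ Cardinal.natCast_lt_aleph0)
  rw [hn] at hrn hpos
  norm_cast at hrn hpos
  omega

theorem Set.Finite.of_isChain_of_strictMonoOn {α : Type*} [PartialOrder α] {S : Set α}
    (hS : IsChain (· ≤ ·) S) {f : α → ℕ} (hf : StrictMonoOn f S) {n : ℕ}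
    (hn : ∀ x ∈ S, f x ≤ n) : S.Finite := by
  have hinj : S.InjOn f := by
    intro x hx y hy hxy
    by_contra hne
    rcases hS.total hx hy with hle | hle
    · exact (hf hx hy (hle.lt_of_ne hne)).ne hxy
    · exact (hf hy hx (hle.lt_of_ne (Ne.symm hne))).ne hxy.symm
  exact Set.Finite.of_finite_image ((Set.finite_Iic n).subset (Set.image_subset_iff.mpr hn)) hinj

section PersistenceModule

variable {R I : Type*} [CommRing R] [Preorder I] (M : I → Type*) [∀ i, AddCommGroup (M i)]
  [∀ i, Module R (M i)] (F : ∀ a b : I, a ≤ b → (M a →ₗ[R] M b))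

theorem ker_le_ker_of_le
    (hcomp : ∀ a b c : I, ∀ (hab : a ≤ b) (hbc : b ≤ c),
      F a c (hab.trans hbc) = (F b c hbc).comp (F a b hab))
    {a y₁ y₂ : I} (h₁ : a ≤ y₁) (h₂ : a ≤ y₂) (h₁₂ : y₁ ≤ y₂) :
    LinearMap.ker (F a y₁ h₁) ≤ LinearMap.ker (F a y₂ h₂) := by
  intro x hx
  simp_all [LinearMap.mem_ker, hcomp a y₁ y₂ h₁ h₁₂]

theorem isChain_kers [Std.Total (α := I) (· ≤ ·)]
    (hcomp : ∀ a b c : I, ∀ (hab : a ≤ b) (hbc : b ≤ c),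
      F a c (hab.trans hbc) = (F b c hbc).comp (F a b hab)) (a : I) :
    IsChain (· ≤ ·)
      {K : Submodule R (M a) | ∃ y : I, ∃ h : a ≤ y, K = LinearMap.ker (F a y h)} := by
  rintro _ ⟨y₁, h₁, rfl⟩ _ ⟨y₂, h₂, rfl⟩ -
  rcases total_of (· ≤ ·) y₁ y₂ with h | h
  · exact Or.inl (ker_le_ker_of_le M F hcomp h₁ h₂ h)
  · exact Or.inr (ker_le_ker_of_le M F hcomp h₂ h₁ h)

end PersistenceModule

theorem stmt2_general {R : Type*} [CommRing R] [IsDomain R]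
    {I : Type*} [LinearOrder I] (M : I → Type*)
    [∀ i, AddCommGroup (M i)] [∀ i, Module R (M i)]
    [∀ i, Module.Free R (M i)] [∀ i, Module.Finite R (M i)]
    (F : ∀ a b : I, a ≤ b → (M a →ₗ[R] M b))
    (hcomp : ∀ a b c : I, ∀ (hab : a ≤ b) (hbc : b ≤ c),
      F a c (hab.trans hbc) = (F b c hbc).comp (F a b hab))
    (a : I) :
    {K : Submodule R (M a) | ∃ y : I, ∃ h : a ≤ y, K = LinearMap.ker (F a y h)}.Finite := by
  refine Set.Finite.of_isChain_of_strictMonoOn (f := fun K ↦ finrank R K) (n := finrank R (M a))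
    (isChain_kers M F hcomp a) ?_ fun K _ ↦ K.finrank_le
  rintro _ ⟨y, h, rfl⟩ K _ hlt
  exact (F a y h).finrank_ker_lt_finrank_of_ker_lt hlt

/-- For a pointwise free, finitely generated persistence module over a PID,
the family of kernels out of `f_a` is finite. -/
theorem stmt2 {R : Type*} [CommRing R] [IsDomain R] [IsPrincipalIdealRing R]
    {I : Type*} [LinearOrder I] (M : I → Type*)
    [∀ i, AddCommGroup (M i)] [∀ i, Module R (M i)]
    [∀ i, Module.Free R (M i)] [∀ i, Module.Finite R (M i)]
    (F : ∀ a b : I, a ≤ b → (M a →ₗ[R] M b))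
    (hid : ∀ a : I, F a a le_rfl = LinearMap.id)
    (hcomp : ∀ a b c : I, ∀ (hab : a ≤ b) (hbc : b ≤ c),
      F a c (hab.trans hbc) = (F b c hbc).comp (F a b hab))
    (a : I) :
    {K : Submodule R (M a) | ∃ y : I, ∃ h : a ≤ y, K = LinearMap.ker (F a y h)}.Finite :=
  stmt2_general M F hcomp a
end

section
/- Let R be a PID and suppose f is a pointwise free, finitely generated persistence module with all cokernels of structure maps free. Fix an index a. Then the family {Im(f(x ≤ a)) : x ≤ a} of image submodules of f_a is finite. -/
/-!
The images `Im f(x ≤ a)` form a chain of submodules of `f_a`, since `f(x ≤ a)` factors through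
`f(y ≤ a)` for `x ≤ y`. Each has a free, hence torsion-free, cokernel, so a strict inclusion
between two of them strictly increases the rank. The rank is bounded by that of `f_a`, so the
chain is finite.
-/

open Module

namespace Submodule

variable {R N : Type*} [CommRing R] [IsDomain R] [IsNoetherianRing R]
  [AddCommGroup N] [Module R N] [Module.Finite R N]

theorem eq_of_le_of_finrank_eq_of_isTorsionFree {V W : Submodule R N}
    [IsTorsionFree R (N ⧸ V)] (hVW : V ≤ W) (hrank : finrank R V = finrank R W) : V = W := by
  refine le_antisymm hVW fun w hw ↦ ?_
  -- `W ⧸ V` has rank zero, so `w` is torsion modulo `V`; torsion-freeness of `N ⧸ V` kills it.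
  let V' := V.comap W.subtype
  have hquot : finrank R (W ⧸ V') = 0 := by
    have := V'.finrank_quotient_add_finrank
    rw [(comapSubtypeEquivOfLe hVW).finrank_eq, hrank] at this
    omega
  obtain ⟨r, hr, hrw⟩ := (finrank_eq_zero_iff.mp hquot) (Quotient.mk ⟨w, hw⟩)
  have : r • V.mkQ w = 0 := by
    rw [← map_smul, mkQ_apply, Quotient.mk_eq_zero]
    simpa [V', ← Quotient.mk_smul, Quotient.mk_eq_zero] using hrw
  simpa [hr] using this

theorem finite_of_isChain_of_isTorsionFree {S : Set (Submodule R N)} (hS : IsChain (· ≤ ·) S)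
    (htf : ∀ V ∈ S, IsTorsionFree R (N ⧸ V)) : S.Finite := by
  have hinj : S.InjOn fun V : Submodule R N ↦ finrank R V := by
    intro V hV W hW hrank
    rcases hS.total hV hW with hle | hle
    · have := htf V hV
      exact eq_of_le_of_finrank_eq_of_isTorsionFree hle hrank
    · have := htf W hW
      exact (eq_of_le_of_finrank_eq_of_isTorsionFree hle hrank.symm).symm
  refine Set.Finite.of_finite_image ((Set.finite_Iic (finrank R N)).subset ?_) hinj
  rintro _ ⟨V, -, rfl⟩
  exact V.finrank_le

end Submodule

theorem stmt5_general {R : Type*} [CommRing R] [IsDomain R] [IsPrincipalIdealRing R]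
    {I : Type*} [LinearOrder I] (M : I → Type*)
    [∀ i, AddCommGroup (M i)] [∀ i, Module R (M i)]
    [∀ i, Module.Finite R (M i)]
    (F : ∀ a b : I, a ≤ b → (M a →ₗ[R] M b))
    (hcomp : ∀ a b c : I, ∀ (hab : a ≤ b) (hbc : b ≤ c),
      F a c (hab.trans hbc) = (F b c hbc).comp (F a b hab))
    (hcoker : ∀ a b : I, ∀ h : a ≤ b, Module.Free R (M b ⧸ LinearMap.range (F a b h)))
    (a : I) :
    {V : Submodule R (M a) | ∃ x : I, ∃ h : x ≤ a, V = LinearMap.range (F x a h)}.Finite := by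
  have hrange_mono : ∀ (x y : I) (hx : x ≤ a) (hy : y ≤ a), x ≤ y →
      LinearMap.range (F x a hx) ≤ LinearMap.range (F y a hy) := fun x y _ hy hxy ↦
    hcomp x y a hxy hy ▸ LinearMap.range_comp_le_range _ _
  refine Submodule.finite_of_isChain_of_isTorsionFree ?_ ?_
  · rintro _ ⟨x, hx, rfl⟩ _ ⟨y, hy, rfl⟩ -
    exact (le_total x y).imp (hrange_mono x y hx hy) (hrange_mono y x hy hx)
  · rintro _ ⟨x, hx, rfl⟩
    have := hcoker x a hx
    infer_instance

/-- For a pointwise free, finitely generated persistence module over a PID with all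
structure-map cokernels free, the family of images into `f_a` is finite. -/
theorem stmt5 {R : Type*} [CommRing R] [IsDomain R] [IsPrincipalIdealRing R]
    {I : Type*} [LinearOrder I] (M : I → Type*)
    [∀ i, AddCommGroup (M i)] [∀ i, Module R (M i)]
    [∀ i, Module.Free R (M i)] [∀ i, Module.Finite R (M i)]
    (F : ∀ a b : I, a ≤ b → (M a →ₗ[R] M b))
    (hid : ∀ a : I, F a a le_rfl = LinearMap.id)
    (hcomp : ∀ a b c : I, ∀ (hab : a ≤ b) (hbc : b ≤ c),
      F a c (hab.trans hbc) = (F b c hbc).comp (F a b hab))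
    (hcoker : ∀ a b : I, ∀ h : a ≤ b, Module.Free R (M b ⧸ LinearMap.range (F a b h)))
    (a : I) :
    {V : Submodule R (M a) | ∃ x : I, ∃ h : x ≤ a, V = LinearMap.range (F x a h)}.Finite :=
  stmt5_general M F hcomp hcoker a
end

section
/- Let f : I → R-Mod be a persistence module over a PID with a consistent basis (γ_i)_{i ∈ I}, meaning each matrix representation of a structure map with respect to these bases is a matching matrix. Then for any a ∈ I and any c ≤ a, the set f(c ≤ a)(γ_c \ ker(f(c ≤ a))) is contained in γ_a and is a basis of Im(f(c ≤ a)); and for any b ≥ a, γ_a ∩ ker(f(a ≤ b)) is a basis of ker(f(a ≤ b)). -/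
/-!
A matching map sends each basis vector either to zero or to a target basis vector, injectively
on the survivors. So the survivors map onto a linearly independent subset of the target basis,
which spans the image; and since the map is injective on the span of the survivors, a vector is
killed only if its survivor part vanishes, i.e. the kernel is spanned by the killed basis vectors.
-/

section

open Submodule
open LinearMap (ker)

variable {R M N : Type*} [Ring R] [AddCommGroup M] [Module R M] [AddCommGroup N] [Module R N]

/-- The matrix of `g` with respect to the bases `s` and `t` is a matching matrix. -/
def LinearMap.IsMatching (g : M →ₗ[R] N) (s : Set M) (t : Set N) : Prop :=
  (∀ v ∈ s, g v = 0 ∨ g v ∈ t) ∧ Set.InjOn g {v ∈ s | g v ≠ 0}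

theorem Submodule.span_image_diff_ker (g : M →ₗ[R] N) (s : Set M) :
    span R (g '' (s \ ker g)) = (span R s).map g := by
  rw [map_span]
  refine le_antisymm (span_mono (Set.image_mono Set.sdiff_subset)) (span_le.mpr ?_)
  rintro _ ⟨v, hv, rfl⟩
  by_cases hgv : g v = 0
  · rw [hgv]
    exact zero_mem _
  · exact subset_span ⟨v, ⟨hv, hgv⟩, rfl⟩

variable {g : M →ₗ[R] N} {s : Set M} {t : Set N}

theorem LinearMap.IsMatching.image_diff_ker_subset (hg : g.IsMatching s t) :
    g '' (s \ ker g) ⊆ t := by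
  rintro _ ⟨v, ⟨hv, hvk⟩, rfl⟩
  exact (hg.1 v hv).resolve_left hvk

theorem LinearMap.IsMatching.linearIndepOn_diff_ker (hg : g.IsMatching s t)
    (ht : LinearIndependent R ((↑) : t → N)) : LinearIndepOn R g (s \ ker g) :=
  (linearIndepOn_iff_image hg.2).mpr <|
    LinearIndepOn.mono (v := _root_.id) ht hg.image_diff_ker_subset

theorem LinearMap.IsMatching.disjoint_span_diff_ker (hg : g.IsMatching s t)
    (ht : LinearIndependent R ((↑) : t → N)) : Disjoint (span R (s \ ker g)) (ker g) := by
  simpa only [Subtype.range_coe] using range_ker_disjoint (hg.linearIndepOn_diff_ker ht)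

theorem LinearMap.IsMatching.span_inter_ker (hg : g.IsMatching s t)
    (ht : LinearIndependent R ((↑) : t → N)) (hs : span R s = ⊤) :
    span R (s ∩ ker g) = ker g := by
  refine le_antisymm (span_le.mpr Set.inter_subset_right) fun x hx => ?_
  have hxs : x ∈ span R (s ∩ ker g) ⊔ span R (s \ ker g) := by
    rw [← span_union, Set.inter_union_sdiff, hs]
    trivial
  obtain ⟨y, hy, z, hz, rfl⟩ := mem_sup.mp hxs
  have hyk : y ∈ ker g := span_le.mpr Set.inter_subset_right hy
  have hzk : z ∈ ker g := by simpa [mem_ker.mp hyk] using hx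
  rw [disjoint_def.mp (hg.disjoint_span_diff_ker ht) z hz hzk, add_zero]
  exact hy

end

theorem stmt14_general {R : Type*} [CommRing R]
    {I : Type*} [LinearOrder I] (M : I → Type*)
    [∀ i, AddCommGroup (M i)] [∀ i, Module R (M i)]
    (F : ∀ a b : I, a ≤ b → (M a →ₗ[R] M b))
    (γ : ∀ i, Set (M i))
    (hbasis : ∀ i, LinearIndependent R ((↑) : γ i → M i) ∧ Submodule.span R (γ i) = ⊤)
    (hmatch : ∀ a b : I, ∀ h : a ≤ b,
      (∀ v ∈ γ a, F a b h v = 0 ∨ F a b h v ∈ γ b) ∧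
      Set.InjOn ⇑(F a b h) {v ∈ γ a | F a b h v ≠ 0})
    (a : I) :
    (∀ c : I, ∀ h : c ≤ a,
      ⇑(F c a h) '' (γ c \ ↑(LinearMap.ker (F c a h))) ⊆ γ a ∧
      Submodule.span R (⇑(F c a h) '' (γ c \ ↑(LinearMap.ker (F c a h)))) =
        LinearMap.range (F c a h) ∧
      LinearIndependent R
        ((↑) : ↥(⇑(F c a h) '' (γ c \ ↑(LinearMap.ker (F c a h)))) → M a)) ∧
    (∀ b : I, ∀ h : a ≤ b,
      Submodule.span R (γ a ∩ ↑(LinearMap.ker (F a b h))) = LinearMap.ker (F a b h) ∧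
      LinearIndependent R ((↑) : ↥(γ a ∩ ↑(LinearMap.ker (F a b h))) → M a)) := by
  refine ⟨fun c h => ?_, fun b h => ?_⟩
  · have hm : (F c a h).IsMatching (γ c) (γ a) := hmatch c a h
    refine ⟨hm.image_diff_ker_subset, ?_,
      LinearIndepOn.mono (v := id) (hbasis a).1 hm.image_diff_ker_subset⟩
    rw [Submodule.span_image_diff_ker, (hbasis c).2, Submodule.map_top]
  · have hm : (F a b h).IsMatching (γ a) (γ b) := hmatch a b h
    exact ⟨hm.span_inter_ker (hbasis b).1 (hbasis a).2,
      LinearIndepOn.mono (v := id) (hbasis a).1 Set.inter_subset_left⟩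

/-- For a persistence module over a PID with a consistent basis `(γ_i)` (all structure maps
are matching matrices in these bases): for `c ≤ a`, the image of `γ_c \ ker(f(c ≤ a))`
lies in `γ_a` and is a basis of `Im(f(c ≤ a))`; for `a ≤ b`, `γ_a ∩ ker(f(a ≤ b))` is a
basis of `ker(f(a ≤ b))`. -/
theorem stmt14 {R : Type*} [CommRing R] [IsDomain R] [IsPrincipalIdealRing R]
    {I : Type*} [LinearOrder I] (M : I → Type*)
    [∀ i, AddCommGroup (M i)] [∀ i, Module R (M i)]
    [∀ i, Module.Free R (M i)] [∀ i, Module.Finite R (M i)]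
    (F : ∀ a b : I, a ≤ b → (M a →ₗ[R] M b))
    (hid : ∀ a : I, F a a le_rfl = LinearMap.id)
    (hcomp : ∀ a b c : I, ∀ (hab : a ≤ b) (hbc : b ≤ c),
      F a c (hab.trans hbc) = (F b c hbc).comp (F a b hab))
    (γ : ∀ i, Set (M i))
    (hbasis : ∀ i, LinearIndependent R ((↑) : γ i → M i) ∧ Submodule.span R (γ i) = ⊤)
    (hmatch : ∀ a b : I, ∀ h : a ≤ b,
      (∀ v ∈ γ a, F a b h v = 0 ∨ F a b h v ∈ γ b) ∧
      Set.InjOn ⇑(F a b h) {v ∈ γ a | F a b h v ≠ 0})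
    (a : I) :
    (∀ c : I, ∀ h : c ≤ a,
      ⇑(F c a h) '' (γ c \ ↑(LinearMap.ker (F c a h))) ⊆ γ a ∧
      Submodule.span R (⇑(F c a h) '' (γ c \ ↑(LinearMap.ker (F c a h)))) =
        LinearMap.range (F c a h) ∧
      LinearIndependent R
        ((↑) : ↥(⇑(F c a h) '' (γ c \ ↑(LinearMap.ker (F c a h)))) → M a)) ∧
    (∀ b : I, ∀ h : a ≤ b,
      Submodule.span R (γ a ∩ ↑(LinearMap.ker (F a b h))) = LinearMap.ker (F a b h) ∧
      LinearIndependent R ((↑) : ↥(γ a ∩ ↑(LinearMap.ker (F a b h))) → M a)) :=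
  stmt14_general M F γ hbasis hmatch a
end
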